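/- arXiv:1810.04852 — 6 statements merged into one kernel-verified Lean document; each statement's English description precedes it below -/
import Mathlib

section
/- Let x, y, z, a, b : I → ℝ be differentiable functions on an open interval I, set r(t) = (x(t),y(t),z(t)) ∈ ℝ³ and n(t) = (−a(t),−b(t),1)/√(1+a(t)²+b(t)²). If ż(t) = a(t)ẋ(t) + b(t)ẏ(t) for all t ∈ I (tangency to the contact distribution), then for every t ∈ I one has ṙ(t)·ṅ(t) = −(ȧ(t)ẋ(t) + ḃ(t)ẏ(t))/√(1+a(t)²+b(t)²); in particular ṙ(t)·ṅ(t) = 0 if and only if ȧ(t)ẋ(t) + ḃ(t)ẏ(t) = 0. -/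
open Matrix

/-! The contact condition `ż = aẋ + bẏ` says exactly that `ṙ` is orthogonal to `(−a, −b, 1)`.
Hence, differentiating `n = (1 + a² + b²)^(-1/2) • (−a, −b, 1)` by the product rule, the term
carrying the derivative of the scalar factor drops out of `ṙ · ṅ`, which leaves
`ṙ · (−ȧ, −ḃ, 0) / √(1 + a² + b²)`. -/

theorem hasDerivAt_vecEmpty {𝕜 F : Type*} [NontriviallyNormedField 𝕜] [NormedAddCommGroup F]
    [NormedSpace 𝕜 F] (t : 𝕜) : HasDerivAt (fun _ => (![] : Fin 0 → F)) ![] t :=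
  (hasDerivAt_const t ![]).congr_deriv (Subsingleton.elim _ _)

theorem HasDerivAt.vecCons {𝕜 F : Type*} [NontriviallyNormedField 𝕜] [NormedAddCommGroup F]
    [NormedSpace 𝕜 F] {n : ℕ} {f : 𝕜 → F} {v : 𝕜 → Fin n → F} {f' : F} {v' : Fin n → F} {t : 𝕜}
    (hf : HasDerivAt f f' t) (hv : HasDerivAt v v' t) :
    HasDerivAt (fun s => vecCons (f s) (v s)) (vecCons f' v') t := by
  refine hasDerivAt_pi.2 fun i => Fin.cases ?_ (fun j => ?_) i
  · simpa using hf
  · simpa using hasDerivAt_pi.1 hv j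

theorem dotProduct_deriv_smul_of_dotProduct_eq_zero {𝕜 ι : Type*} [NontriviallyNormedField 𝕜]
    [Fintype ι] {g : 𝕜 → 𝕜} {v : 𝕜 → ι → 𝕜} {w v' : ι → 𝕜} {t : 𝕜}
    (hg : DifferentiableAt 𝕜 g t) (hv : HasDerivAt v v' t) (hwv : w ⬝ᵥ v t = 0) :
    w ⬝ᵥ deriv (fun s => g s • v s) t = g t * (w ⬝ᵥ v') := by
  rw [(hg.hasDerivAt.fun_smul hv).deriv, dotProduct_add, dotProduct_smul, dotProduct_smul, hwv,
    smul_zero, add_zero, smul_eq_mul]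

/-- For a curve `(x,y,z,a,b)` of differentiable functions on an open interval `I`,
with position `r = (x,y,z)` and unit normal `n = (−a,−b,1)/√(1+a²+b²)`, if the
nonholonomic constraint `ż = aẋ + bẏ` holds on `I`, then on `I` one has
`ṙ·ṅ = −(ȧẋ + ḃẏ)/√(1+a²+b²)`; in particular `ṙ·ṅ = 0 ↔ ȧẋ + ḃẏ = 0`. -/
theorem attacking_mode_dot_formula (c d : ℝ) (x y z a b : ℝ → ℝ)
    (hx : ∀ t ∈ Set.Ioo c d, DifferentiableAt ℝ x t)
    (hy : ∀ t ∈ Set.Ioo c d, DifferentiableAt ℝ y t)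
    (hz : ∀ t ∈ Set.Ioo c d, DifferentiableAt ℝ z t)
    (ha : ∀ t ∈ Set.Ioo c d, DifferentiableAt ℝ a t)
    (hb : ∀ t ∈ Set.Ioo c d, DifferentiableAt ℝ b t)
    (hcon : ∀ t ∈ Set.Ioo c d, deriv z t = a t * deriv x t + b t * deriv y t) :
    ∀ t ∈ Set.Ioo c d,
      (deriv (fun s => (![x s, y s, z s] : Fin 3 → ℝ)) t ⬝ᵥ
        deriv (fun s =>
          (Real.sqrt (1 + a s ^ 2 + b s ^ 2))⁻¹ • (![-a s, -b s, 1] : Fin 3 → ℝ)) t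
        = -(deriv a t * deriv x t + deriv b t * deriv y t)
            / Real.sqrt (1 + a t ^ 2 + b t ^ 2)) ∧
      (deriv (fun s => (![x s, y s, z s] : Fin 3 → ℝ)) t ⬝ᵥ
        deriv (fun s =>
          (Real.sqrt (1 + a s ^ 2 + b s ^ 2))⁻¹ • (![-a s, -b s, 1] : Fin 3 → ℝ)) t = 0
        ↔ deriv a t * deriv x t + deriv b t * deriv y t = 0) := by
  intro t ht
  have hS : 0 < Real.sqrt (1 + a t ^ 2 + b t ^ 2) := by positivity
  have hr : HasDerivAt (fun s => (![x s, y s, z s] : Fin 3 → ℝ))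
      ![deriv x t, deriv y t, deriv z t] t :=
    (hx t ht).hasDerivAt.vecCons <| (hy t ht).hasDerivAt.vecCons <|
      (hz t ht).hasDerivAt.vecCons <| hasDerivAt_vecEmpty t
  have hv : HasDerivAt (fun s => (![-a s, -b s, 1] : Fin 3 → ℝ))
      ![-deriv a t, -deriv b t, 0] t :=
    (ha t ht).hasDerivAt.neg.vecCons <| (hb t ht).hasDerivAt.neg.vecCons <|
      (hasDerivAt_const t 1).vecCons <| hasDerivAt_vecEmpty t
  have hg : DifferentiableAt ℝ (fun s => (Real.sqrt (1 + a s ^ 2 + b s ^ 2))⁻¹) t := by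
    have := ha t ht
    have := hb t ht
    fun_prop (disch := positivity)
  have hcontact : ![deriv x t, deriv y t, deriv z t] ⬝ᵥ ![-a t, -b t, 1] = 0 := by
    simp only [dotProduct, Fin.sum_univ_three, cons_val_zero, cons_val_one, cons_val, hcon t ht]
    ring
  have hdot : deriv (fun s => (![x s, y s, z s] : Fin 3 → ℝ)) t ⬝ᵥ
      deriv (fun s =>
        (Real.sqrt (1 + a s ^ 2 + b s ^ 2))⁻¹ • (![-a s, -b s, 1] : Fin 3 → ℝ)) t
      = -(deriv a t * deriv x t + deriv b t * deriv y t) / Real.sqrt (1 + a t ^ 2 + b t ^ 2) := by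
    rw [hr.deriv, dotProduct_deriv_smul_of_dotProduct_eq_zero hg hv hcontact]
    simp only [dotProduct, Fin.sum_univ_three, cons_val_zero, cons_val_one, cons_val]
    field_simp
    ring
  exact ⟨hdot, by rw [hdot, div_eq_zero_iff, neg_eq_zero, or_iff_left hS.ne']⟩
end

section
/- Let G and J be the 4×4 real matrices G = [[0,0,0,1],[0,0,1,0],[0,1,0,0],[1,0,0,0]] and J = [[0,0,0,1],[0,0,1,0],[0,−1,0,0],[−1,0,0,0]]. Then the set 𝔤₀ = { Y ∈ M₄(ℝ) : ∃ f₁, f₂ ∈ ℝ such that Yᵀ·G + G·Y = f₁·G and Yᵀ·J + J·Y = f₂·J } is a 5-dimensional real linear subspace of M₄(ℝ), with basis Y₁ = diag(1,−1,1,−1); Y₂ the matrix with entry 1 in position (1,2), entry −1 in position (3,4), zeros elsewhere; Y₃ the matrix with entry 1 in position (2,1), entry −1 in position (4,3), zeros elsewhere; Y₄ = diag(1,1,−1,−1); Y₅ = Id₄. Moreover the matrix commutators satisfy [Y₁,Y₂] = 2Y₂, [Y₁,Y₃] = −2Y₃, [Y₂,Y₃] = Y₁, and Y₄ and Y₅ commute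 with every element of 𝔤₀ (so 𝔤₀ ≅ 𝔰𝔩(2,ℝ) ⊕ ℝ² as a Lie algebra). -/
set_option maxHeartbeats 1000000


open Matrix

/-- Matrix of the split-signature metric `g = 2(ω¹ω⁴ + ω²ω³)`. -/
def Gmat : Matrix (Fin 4) (Fin 4) ℝ := !![0,0,0,1; 0,0,1,0; 0,1,0,0; 1,0,0,0]

/-- Matrix of the symplectic form `Ω = ω¹∧ω⁴ + ω²∧ω³`. -/
def Jmat : Matrix (Fin 4) (Fin 4) ℝ := !![0,0,0,1; 0,0,1,0; 0,-1,0,0; -1,0,0,0]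

/-- The Lie algebra `𝔤₀` of matrices preserving `g` and `Ω` up to scale. -/
def g0 : Set (Matrix (Fin 4) (Fin 4) ℝ) :=
  {Y | ∃ f₁ f₂ : ℝ, Yᵀ * Gmat + Gmat * Y = f₁ • Gmat ∧ Yᵀ * Jmat + Jmat * Y = f₂ • Jmat}

def Y1 : Matrix (Fin 4) (Fin 4) ℝ := !![1,0,0,0; 0,-1,0,0; 0,0,1,0; 0,0,0,-1]
def Y2 : Matrix (Fin 4) (Fin 4) ℝ := !![0,1,0,0; 0,0,0,0; 0,0,0,-1; 0,0,0,0]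
def Y3 : Matrix (Fin 4) (Fin 4) ℝ := !![0,0,0,0; 1,0,0,0; 0,0,0,0; 0,0,-1,0]
def Y4 : Matrix (Fin 4) (Fin 4) ℝ := !![1,0,0,0; 0,1,0,0; 0,0,-1,0; 0,0,0,-1]
def Y5 : Matrix (Fin 4) (Fin 4) ℝ := 1

lemma fmk0 (h : 0 < 4) : (⟨0, h⟩ : Fin 4) = 0 := rfl
lemma fmk1 (h : 1 < 4) : (⟨1, h⟩ : Fin 4) = 1 := rfl
lemma fmk2 (h : 2 < 4) : (⟨2, h⟩ : Fin 4) = 2 := rfl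
lemma fmk3 (h : 3 < 4) : (⟨3, h⟩ : Fin 4) = 3 := rfl
lemma gmk0 (h : 0 < 5) : (⟨0, h⟩ : Fin 5) = 0 := rfl
lemma gmk1 (h : 1 < 5) : (⟨1, h⟩ : Fin 5) = 1 := rfl
lemma gmk2 (h : 2 < 5) : (⟨2, h⟩ : Fin 5) = 2 := rfl
lemma gmk3 (h : 3 < 5) : (⟨3, h⟩ : Fin 5) = 3 := rfl
lemma gmk4 (h : 4 < 5) : (⟨4, h⟩ : Fin 5) = 4 := rfl

lemma Y5_eq : Y5 = !![1,0,0,0; 0,1,0,0; 0,0,1,0; 0,0,0,1] := by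
  ext i j
  fin_cases i <;> fin_cases j <;> rfl
lemma eta4 (Y : Matrix (Fin 4) (Fin 4) ℝ) :
    Y = !![Y 0 0, Y 0 1, Y 0 2, Y 0 3; Y 1 0, Y 1 1, Y 1 2, Y 1 3;
           Y 2 0, Y 2 1, Y 2 2, Y 2 3; Y 3 0, Y 3 1, Y 3 2, Y 3 3] := by
  ext i j
  fin_cases i <;> fin_cases j <;> rfl

lemma g0_rel (Y : Matrix (Fin 4) (Fin 4) ℝ) (h : Y ∈ g0) :
    Y 0 2 = 0 ∧ Y 0 3 = 0 ∧ Y 1 2 = 0 ∧ Y 1 3 = 0 ∧ Y 2 0 = 0 ∧ Y 2 1 = 0 ∧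
    Y 3 0 = 0 ∧ Y 3 1 = 0 ∧ Y 0 1 = -Y 2 3 ∧ Y 1 0 = -Y 3 2 ∧
    Y 0 0 + Y 3 3 = Y 1 1 + Y 2 2 := by
  obtain ⟨f1, f2, h1, h2⟩ := h
  have H1 : ∀ i j, (Yᵀ * Gmat + Gmat * Y) i j = (f1 • Gmat) i j := fun i j => by rw [h1]
  have H2 : ∀ i j, (Yᵀ * Jmat + Jmat * Y) i j = (f2 • Jmat) i j := fun i j => by rw [h2]
  have e1 := H1 0 0
  have e2 := H1 1 1
  have e3 := H1 2 2
  have e4 := H1 3 3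
  have e5 := H1 0 1
  have e6 := H2 0 1
  have e7 := H1 0 2
  have e8 := H1 1 3
  have e9 := H1 0 3
  have e10 := H1 1 2
  have e11 := H1 2 3
  have e12 := H2 2 3
  simp only [Gmat, Jmat, fmk0, fmk1, fmk2, fmk3, gmk0, gmk1, gmk2, gmk3, gmk4, Matrix.add_apply, Matrix.sub_apply, Matrix.mul_apply, Matrix.transpose_apply, Matrix.smul_apply, smul_eq_mul, Fin.sum_univ_four, Fin.sum_univ_five, Matrix.cons_val', Matrix.cons_val_zero, Matrix.cons_val_one, Matrix.cons_val_two, Matrix.cons_val_three, Matrix.cons_val_four, Matrix.head_cons, Matrix.tail_cons, Matrix.empty_val', Matrix.cons_val_fin_one, Matrix.head_fin_const, Matrix.of_apply, Matrix.zero_apply] at e1 e2 e3 e4 e5 e6 e7 e8 e9 e10 e11 e12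
  norm_num at e1 e2 e3 e4 e5 e6 e7 e8 e9 e10 e11 e12
  refine ⟨by linarith, by linarith, by linarith, by linarith, by linarith, by linarith,
    by linarith, by linarith, by linarith, by linarith, by linarith⟩

lemma gen_mem_g0 : Y1 ∈ g0 ∧ Y2 ∈ g0 ∧ Y3 ∈ g0 ∧ Y4 ∈ g0 ∧ Y5 ∈ g0 := by
  refine ⟨⟨0, 0, ?_, ?_⟩, ⟨0, 0, ?_, ?_⟩, ⟨0, 0, ?_, ?_⟩, ⟨0, 0, ?_, ?_⟩, ⟨2, 2, ?_, ?_⟩⟩ <;>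
    · ext i j
      fin_cases i <;> fin_cases j <;>
        · simp only [Y1, Y2, Y3, Y4, Y5_eq, Gmat, Jmat, fmk0, fmk1, fmk2, fmk3, gmk0, gmk1, gmk2, gmk3, gmk4, Matrix.add_apply, Matrix.sub_apply, Matrix.mul_apply, Matrix.transpose_apply, Matrix.smul_apply, smul_eq_mul, Fin.sum_univ_four, Fin.sum_univ_five, Matrix.cons_val', Matrix.cons_val_zero, Matrix.cons_val_one, Matrix.cons_val_two, Matrix.cons_val_three, Matrix.cons_val_four, Matrix.head_cons, Matrix.tail_cons, Matrix.empty_val', Matrix.cons_val_fin_one, Matrix.head_fin_const, Matrix.of_apply, Matrix.zero_apply]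
          norm_num

/-- `𝔤₀` is a 5-dimensional real subspace of `M₄(ℝ)` with basis `Y₁,…,Y₅`, satisfying
`[Y₁,Y₂] = 2Y₂`, `[Y₁,Y₃] = −2Y₃`, `[Y₂,Y₃] = Y₁`, and `Y₄, Y₅` are central in `𝔤₀`;
hence `𝔤₀ ≅ 𝔰𝔩(2,ℝ) ⊕ ℝ²`. -/
theorem g0_structure :
    (∀ Y : Matrix (Fin 4) (Fin 4) ℝ,
      Y ∈ g0 ↔ Y ∈ Submodule.span ℝ ({Y1, Y2, Y3, Y4, Y5} : Set (Matrix (Fin 4) (Fin 4) ℝ))) ∧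
    LinearIndependent ℝ ![Y1, Y2, Y3, Y4, Y5] ∧
    Y1 * Y2 - Y2 * Y1 = (2 : ℝ) • Y2 ∧
    Y1 * Y3 - Y3 * Y1 = (-2 : ℝ) • Y3 ∧
    Y2 * Y3 - Y3 * Y2 = Y1 ∧
    (∀ Y ∈ g0, Y4 * Y = Y * Y4 ∧ Y5 * Y = Y * Y5) := by
  obtain ⟨hm1, hm2, hm3, hm4, hm5⟩ := gen_mem_g0
  refine ⟨?_, ?_, ?_, ?_, ?_, ?_⟩
  · intro Y
    constructor
    · intro hY
      obtain ⟨z02, z03, z12, z13, z20, z21, z30, z31, z01, z10, ztr⟩ := g0_rel Y hY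
      have key : Y = ((Y 2 2 - Y 3 3)/2) • Y1 + (-Y 2 3) • Y2 + (-Y 3 2) • Y3 +
          ((Y 0 0 - Y 2 2)/2) • Y4 + ((Y 0 0 + Y 3 3)/2) • Y5 := by
        rw [eta4 Y, z02, z03, z12, z13, z20, z21, z30, z31, z01, z10]
        ext i j
        fin_cases i <;> fin_cases j <;>
          · simp only [Y1, Y2, Y3, Y4, Y5_eq, fmk0, fmk1, fmk2, fmk3, gmk0, gmk1, gmk2, gmk3, gmk4, Matrix.add_apply, Matrix.sub_apply, Matrix.mul_apply, Matrix.transpose_apply, Matrix.smul_apply, smul_eq_mul, Fin.sum_univ_four, Fin.sum_univ_five, Matrix.cons_val', Matrix.cons_val_zero, Matrix.cons_val_one, Matrix.cons_val_two, Matrix.cons_val_three, Matrix.cons_val_four, Matrix.head_cons, Matrix.tail_cons, Matrix.empty_val', Matrix.cons_val_fin_one, Matrix.head_fin_const, Matrix.of_apply, Matrix.zero_apply]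
            norm_num
            try linarith
      rw [key]
      have s1 : Y1 ∈ Submodule.span ℝ ({Y1, Y2, Y3, Y4, Y5} : Set (Matrix (Fin 4) (Fin 4) ℝ)) :=
        Submodule.subset_span (by simp)
      have s2 : Y2 ∈ Submodule.span ℝ ({Y1, Y2, Y3, Y4, Y5} : Set (Matrix (Fin 4) (Fin 4) ℝ)) :=
        Submodule.subset_span (by simp)
      have s3 : Y3 ∈ Submodule.span ℝ ({Y1, Y2, Y3, Y4, Y5} : Set (Matrix (Fin 4) (Fin 4) ℝ)) :=
        Submodule.subset_span (by simp)
      have s4 : Y4 ∈ Submodule.span ℝ ({Y1, Y2, Y3, Y4, Y5} : Set (Matrix (Fin 4) (Fin 4) ℝ)) :=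
        Submodule.subset_span (by simp)
      have s5 : Y5 ∈ Submodule.span ℝ ({Y1, Y2, Y3, Y4, Y5} : Set (Matrix (Fin 4) (Fin 4) ℝ)) :=
        Submodule.subset_span (by simp)
      exact Submodule.add_mem _ (Submodule.add_mem _ (Submodule.add_mem _ (Submodule.add_mem _
        (Submodule.smul_mem _ _ s1) (Submodule.smul_mem _ _ s2)) (Submodule.smul_mem _ _ s3))
        (Submodule.smul_mem _ _ s4)) (Submodule.smul_mem _ _ s5)
    · intro hY
      induction hY using Submodule.span_induction with
      | mem x hx =>
        rcases hx with h | h | h | h | h <;> subst h <;> assumption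
      | zero => exact ⟨0, 0, by simp, by simp⟩
      | add x y _ _ hx hy =>
        obtain ⟨a1, a2, ha1, ha2⟩ := hx
        obtain ⟨b1, b2, hb1, hb2⟩ := hy
        refine ⟨a1 + b1, a2 + b2, ?_, ?_⟩
        · rw [transpose_add, add_mul, mul_add, add_smul, ← ha1, ← hb1]; abel
        · rw [transpose_add, add_mul, mul_add, add_smul, ← ha2, ← hb2]; abel
      | smul c x _ hx =>
        obtain ⟨a1, a2, ha1, ha2⟩ := hx
        refine ⟨c * a1, c * a2, ?_, ?_⟩
        · rw [transpose_smul, smul_mul_assoc, mul_smul_comm, ← smul_add, ha1, smul_smul]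
        · rw [transpose_smul, smul_mul_assoc, mul_smul_comm, ← smul_add, ha2, smul_smul]
  · rw [Fintype.linearIndependent_iff]
    intro g hg i
    have H : ∀ a b, (∑ i, g i • ![Y1, Y2, Y3, Y4, Y5] i) a b = (0 : Matrix (Fin 4) (Fin 4) ℝ) a b :=
      fun a b => by rw [hg]
    have e1 := H 0 0
    have e2 := H 1 1
    have e3 := H 2 2
    have e4 := H 0 1
    have e5 := H 1 0
    simp only [Y1, Y2, Y3, Y4, Y5_eq, fmk0, fmk1, fmk2, fmk3, gmk0, gmk1, gmk2, gmk3, gmk4, Matrix.add_apply, Matrix.sub_apply, Matrix.mul_apply, Matrix.transpose_apply, Matrix.smul_apply, smul_eq_mul, Fin.sum_univ_four, Fin.sum_univ_five, Matrix.cons_val', Matrix.cons_val_zero, Matrix.cons_val_one, Matrix.cons_val_two, Matrix.cons_val_three, Matrix.cons_val_four, Matrix.head_cons, Matrix.tail_cons, Matrix.empty_val', Matrix.cons_val_fin_one, Matrix.head_fin_const, Matrix.of_apply, Matrix.zero_apply] at e1 e2 e3 e4 e5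
    norm_num at e1 e2 e3 e4 e5
    fin_cases i <;> simp only [fmk0, fmk1, fmk2, fmk3, gmk0, gmk1, gmk2, gmk3, gmk4, Matrix.add_apply, Matrix.sub_apply, Matrix.mul_apply, Matrix.transpose_apply, Matrix.smul_apply, smul_eq_mul, Fin.sum_univ_four, Fin.sum_univ_five, Matrix.cons_val', Matrix.cons_val_zero, Matrix.cons_val_one, Matrix.cons_val_two, Matrix.cons_val_three, Matrix.cons_val_four, Matrix.head_cons, Matrix.tail_cons, Matrix.empty_val', Matrix.cons_val_fin_one, Matrix.head_fin_const, Matrix.of_apply, Matrix.zero_apply] <;> linarith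
  · ext i j
    fin_cases i <;> fin_cases j <;>
      · simp only [Y1, Y2, fmk0, fmk1, fmk2, fmk3, gmk0, gmk1, gmk2, gmk3, gmk4, Matrix.add_apply, Matrix.sub_apply, Matrix.mul_apply, Matrix.transpose_apply, Matrix.smul_apply, smul_eq_mul, Fin.sum_univ_four, Fin.sum_univ_five, Matrix.cons_val', Matrix.cons_val_zero, Matrix.cons_val_one, Matrix.cons_val_two, Matrix.cons_val_three, Matrix.cons_val_four, Matrix.head_cons, Matrix.tail_cons, Matrix.empty_val', Matrix.cons_val_fin_one, Matrix.head_fin_const, Matrix.of_apply, Matrix.zero_apply]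
        norm_num
  · ext i j
    fin_cases i <;> fin_cases j <;>
      · simp only [Y1, Y3, fmk0, fmk1, fmk2, fmk3, gmk0, gmk1, gmk2, gmk3, gmk4, Matrix.add_apply, Matrix.sub_apply, Matrix.mul_apply, Matrix.transpose_apply, Matrix.smul_apply, smul_eq_mul, Fin.sum_univ_four, Fin.sum_univ_five, Matrix.cons_val', Matrix.cons_val_zero, Matrix.cons_val_one, Matrix.cons_val_two, Matrix.cons_val_three, Matrix.cons_val_four, Matrix.head_cons, Matrix.tail_cons, Matrix.empty_val', Matrix.cons_val_fin_one, Matrix.head_fin_const, Matrix.of_apply, Matrix.zero_apply]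
        norm_num
  · ext i j
    fin_cases i <;> fin_cases j <;>
      · simp only [Y1, Y2, Y3, fmk0, fmk1, fmk2, fmk3, gmk0, gmk1, gmk2, gmk3, gmk4, Matrix.add_apply, Matrix.sub_apply, Matrix.mul_apply, Matrix.transpose_apply, Matrix.smul_apply, smul_eq_mul, Fin.sum_univ_four, Fin.sum_univ_five, Matrix.cons_val', Matrix.cons_val_zero, Matrix.cons_val_one, Matrix.cons_val_two, Matrix.cons_val_three, Matrix.cons_val_four, Matrix.head_cons, Matrix.tail_cons, Matrix.empty_val', Matrix.cons_val_fin_one, Matrix.head_fin_const, Matrix.of_apply, Matrix.zero_apply]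
        norm_num
  · intro Y hY
    obtain ⟨z02, z03, z12, z13, z20, z21, z30, z31, z01, z10, ztr⟩ := g0_rel Y hY
    constructor
    · rw [eta4 Y, z02, z03, z12, z13, z20, z21, z30, z31, z01, z10]
      ext i j
      fin_cases i <;> fin_cases j <;>
        · simp only [Y4, fmk0, fmk1, fmk2, fmk3, gmk0, gmk1, gmk2, gmk3, gmk4, Matrix.add_apply, Matrix.sub_apply, Matrix.mul_apply, Matrix.transpose_apply, Matrix.smul_apply, smul_eq_mul, Fin.sum_univ_four, Fin.sum_univ_five, Matrix.cons_val', Matrix.cons_val_zero, Matrix.cons_val_one, Matrix.cons_val_two, Matrix.cons_val_three, Matrix.cons_val_four, Matrix.head_cons, Matrix.tail_cons, Matrix.empty_val', Matrix.cons_val_fin_one, Matrix.head_fin_const, Matrix.of_apply, Matrix.zero_apply]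
          ring
    · rw [Y5, one_mul, mul_one]
end

section
/- On ℝ⁵ with coordinates (x,y,z,a,b), let ω⁰ = dz − a dx − b dy (a 1-form with components ω⁰ = (−a,−b,1,0,0)) and let g be the symmetric 2-tensor g = 2(dx da + dy db), i.e. g(v,w) = v_x w_a + v_a w_x + v_y w_b + v_b w_y. Each of the following 15 smooth vector fields is an infinitesimal symmetry of the pair (ω⁰, g): X₁ = z(x∂x+y∂y+z∂z)+(z−ax−by)(a∂a+b∂b); X₂ = x(x∂x+y∂y+z∂z)+(z−ax−by)∂a; X₃ = −z∂y+b(a∂a+b∂b); X₄ = −x∂y+b∂a; X₅ = −z∂x+a(a∂a+b∂b); X₆ = −x∂x+a∂a; X₇ = x∂z+∂a; X₈ = y(x∂x+y∂y+z∂z)+(z−ax−by)∂b; X₉ = −y∂x+a∂b; X₁₀ = x∂x+z∂z+b∂b; X₁₁ = y∂z+∂b; X₁₂ = x∂x+y∂y+z∂z; X₁₃ = ∂y; X₁₄ = ∂x; X₁₅ = ∂z. That is, for each Xᵢ there exist smooth functions p, q : ℝ⁵ → ℝ and a smooth 1-form μ on ℝ⁵ such that L_{Xᵢ}ω⁰ =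 p·ω⁰ and L_{Xᵢ}g = q·g + μ⊙ω⁰. Moreover X₁, …, X₁₅ are linearly independent over ℝ. -/
noncomputable section

/-- Points of `ℝ⁵` with coordinates `(x,y,z,a,b) = (p 0, p 1, p 2, p 3, p 4)`. -/
abbrev Pt := Fin 5 → ℝ

/-- Vector fields on `ℝ⁵`. -/
abbrev VF := Pt → Pt

/-- Partial derivative `∂_i f` of a scalar function on `ℝ⁵`. -/
def pd (i : Fin 5) (f : Pt → ℝ) (p : Pt) : ℝ := fderiv ℝ f p (Pi.single i 1)

/-- Components of the contact form `ω⁰ = dz − a dx − b dy`. -/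
def ω0 : Pt → Pt := fun p => ![-p 3, -p 4, 1, 0, 0]

/-- Components of the symmetric 2-tensor `g = 2(dx da + dy db)`:
`g(v,w) = v_x w_a + v_a w_x + v_y w_b + v_b w_y`. -/
def gA : Pt → Fin 5 → Fin 5 → ℝ := fun _ =>
  ![![0,0,0,1,0], ![0,0,0,0,1], ![0,0,0,0,0], ![1,0,0,0,0], ![0,1,0,0,0]]

/-- Components of the Lie derivative of the 1-form `ω⁰` along `X`:
`(L_Xω)_μ = Σ_ν (X^ν ∂_ν ω_μ + ω_ν ∂_μ X^ν)`. -/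
def lieOmega (X : VF) (μ : Fin 5) (p : Pt) : ℝ :=
  ∑ ν, (X p ν * pd ν (fun q => ω0 q μ) p + ω0 p ν * pd μ (fun q => X q ν) p)

/-- Components of the Lie derivative of the symmetric 2-tensor `g` along `X`:
`(L_Xg)_{μν} = Σ_ρ (X^ρ ∂_ρ g_{μν} + g_{ρν} ∂_μ X^ρ + g_{μρ} ∂_ν X^ρ)`. -/
def lieG (X : VF) (μ ν : Fin 5) (p : Pt) : ℝ :=
  ∑ ρ, (X p ρ * pd ρ (fun q => gA q μ ν) p
    + gA p ρ ν * pd μ (fun q => X q ρ) p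
    + gA p μ ρ * pd ν (fun q => X q ρ) p)

/-- The 15 symmetry vector fields of the attacking-mode Legendrean contact structure. -/
def Xatt : Fin 15 → VF :=
  ![fun p => ![p 2 * p 0, p 2 * p 1, p 2 * p 2,
      (p 2 - p 3 * p 0 - p 4 * p 1) * p 3, (p 2 - p 3 * p 0 - p 4 * p 1) * p 4],
    fun p => ![p 0 * p 0, p 0 * p 1, p 0 * p 2, p 2 - p 3 * p 0 - p 4 * p 1, 0],
    fun p => ![0, -p 2, 0, p 4 * p 3, p 4 * p 4],
    fun p => ![0, -p 0, 0, p 4, 0],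
    fun p => ![-p 2, 0, 0, p 3 * p 3, p 3 * p 4],
    fun p => ![-p 0, 0, 0, p 3, 0],
    fun p => ![0, 0, p 0, 1, 0],
    fun p => ![p 1 * p 0, p 1 * p 1, p 1 * p 2, 0, p 2 - p 3 * p 0 - p 4 * p 1],
    fun p => ![-p 1, 0, 0, 0, p 3],
    fun p => ![p 0, 0, p 2, 0, p 4],
    fun p => ![0, 0, p 1, 0, 1],
    fun p => ![p 0, p 1, p 2, 0, 0],
    fun _ => ![0, 1, 0, 0, 0],
    fun _ => ![1, 0, 0, 0, 0],
    fun _ => ![0, 0, 1, 0, 0]]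

lemma diff_coord (j : Fin 5) : Differentiable ℝ (fun q : Pt => q j) :=
  (ContinuousLinearMap.proj j : Pt →L[ℝ] ℝ).differentiable

lemma smooth_coord (j : Fin 5) : ContDiff ℝ (⊤ : ℕ∞) (fun q : Pt => q j) :=
  (ContinuousLinearMap.proj j : Pt →L[ℝ] ℝ).contDiff

@[simp] lemma pd_const (i : Fin 5) (c : ℝ) (p : Pt) : pd i (fun _ => c) p = 0 := by
  simp [pd]

@[simp] lemma pd_coord (i j : Fin 5) (p : Pt) :
    pd i (fun q => q j) p = if i = j then 1 else 0 := by
  have h : (fun q : Pt => q j) = (ContinuousLinearMap.proj j : Pt →L[ℝ] ℝ) := rfl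
  rw [pd, h, ContinuousLinearMap.fderiv]
  simp [Pi.single_apply, eq_comm]

@[simp] lemma pd_neg (i : Fin 5) (f : Pt → ℝ) (p : Pt) :
    pd i (fun q => -f q) p = -pd i f p := by
  simp [pd, fderiv_neg]

lemma pd_mul {f g : Pt → ℝ} (hf : Differentiable ℝ f) (hg : Differentiable ℝ g)
    (i : Fin 5) (p : Pt) :
    pd i (fun q => f q * g q) p = pd i f p * g p + f p * pd i g p := by
  simp only [pd, fderiv_fun_mul (hf p) (hg p)]
  simp only [ContinuousLinearMap.add_apply, ContinuousLinearMap.smul_apply, smul_eq_mul]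
  ring

lemma pd_sub {f g : Pt → ℝ} (hf : Differentiable ℝ f) (hg : Differentiable ℝ g)
    (i : Fin 5) (p : Pt) :
    pd i (fun q => f q - g q) p = pd i f p - pd i g p := by
  simp [pd, fderiv_fun_sub (hf p) (hg p)]

@[simp] lemma pd_mul_coord (i j k : Fin 5) (p : Pt) :
    pd i (fun q => q j * q k) p
      = (if i = j then p k else 0) + (if i = k then p j else 0) := by
  rw [pd_mul (diff_coord j) (diff_coord k)]
  rcases eq_or_ne i j with h | h <;> rcases eq_or_ne i k with h' | h' <;> simp [h, h']

lemma diff_phi : Differentiable ℝ (fun q : Pt => q 2 - q 3 * q 0 - q 4 * q 1) :=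
  ((diff_coord 2).sub ((diff_coord 3).mul (diff_coord 0))).sub
    ((diff_coord 4).mul (diff_coord 1))

@[simp] lemma pd_phi (i : Fin 5) (p : Pt) :
    pd i (fun q => q 2 - q 3 * q 0 - q 4 * q 1) p
      = (if i = 2 then 1 else 0)
        - ((if i = 3 then p 0 else 0) + (if i = 0 then p 3 else 0))
        - ((if i = 4 then p 1 else 0) + (if i = 1 then p 4 else 0)) := by
  rw [pd_sub (f := fun q : Pt => q 2 - q 3 * q 0) (g := fun q : Pt => q 4 * q 1)
      ((diff_coord 2).sub ((diff_coord 3).mul (diff_coord 0)))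
      ((diff_coord 4).mul (diff_coord 1)),
    pd_sub (f := fun q : Pt => q 2) (g := fun q : Pt => q 3 * q 0)
      (diff_coord 2) ((diff_coord 3).mul (diff_coord 0))]
  simp

@[simp] lemma pd_phi_mul (i j : Fin 5) (p : Pt) :
    pd i (fun q => (q 2 - q 3 * q 0 - q 4 * q 1) * q j) p
      = ((if i = 2 then 1 else 0)
        - ((if i = 3 then p 0 else 0) + (if i = 0 then p 3 else 0))
        - ((if i = 4 then p 1 else 0) + (if i = 1 then p 4 else 0))) * p j
        + (p 2 - p 3 * p 0 - p 4 * p 1) * (if i = j then 1 else 0) := by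
  rw [pd_mul diff_phi (diff_coord j), pd_phi, pd_coord]

/-- Helper: verify one symmetry with `qf = pf`. -/
lemma symcheck (X : VF) (pf : Pt → ℝ) (μf : Pt → Pt)
    (hp : ContDiff ℝ (⊤ : ℕ∞) pf) (hμ : ContDiff ℝ (⊤ : ℕ∞) μf)
    (h1 : ∀ (μ : Fin 5) (p : Pt), lieOmega X μ p = pf p * ω0 p μ)
    (h2 : ∀ (μ ν : Fin 5) (p : Pt),
      lieG X μ ν p = pf p * gA p μ ν + (μf p μ * ω0 p ν + μf p ν * ω0 p μ)) :
    ∃ (pf qf : Pt → ℝ) (μf : Pt → Pt),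
      ContDiff ℝ (⊤ : ℕ∞) pf ∧ ContDiff ℝ (⊤ : ℕ∞) qf ∧ ContDiff ℝ (⊤ : ℕ∞) μf ∧
      (∀ (μ : Fin 5) (p : Pt), lieOmega X μ p = pf p * ω0 p μ) ∧
      (∀ (μ ν : Fin 5) (p : Pt),
        lieG X μ ν p = qf p * gA p μ ν + (μf p μ * ω0 p ν + μf p ν * ω0 p μ)) :=
  ⟨pf, pf, μf, hp, hp, hμ, h1, h2⟩

lemma att0 :
    ∃ (pf qf : Pt → ℝ) (μf : Pt → Pt),
      ContDiff ℝ (⊤ : ℕ∞) pf ∧ ContDiff ℝ (⊤ : ℕ∞) qf ∧ ContDiff ℝ (⊤ : ℕ∞) μf ∧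
      (∀ (μ : Fin 5) (p : Pt), lieOmega (Xatt 0) μ p = pf p * ω0 p μ) ∧
      (∀ (μ ν : Fin 5) (p : Pt),
        lieG (Xatt 0) μ ν p
          = qf p * gA p μ ν + (μf p μ * ω0 p ν + μf p ν * ω0 p μ)) := by
  have hX : Xatt 0 = (fun p => ![p 2 * p 0, p 2 * p 1, p 2 * p 2,
      (p 2 - p 3 * p 0 - p 4 * p 1) * p 3, (p 2 - p 3 * p 0 - p 4 * p 1) * p 4]) := rfl
  rw [hX]
  refine symcheck _ (fun p => 2 * p 2 - p 1 * p 4 - p 0 * p 3) (fun p => ![p 3, p 4, 0, p 0, p 1]) ?_ ?_ ?_ ?_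
  · fun_prop
  · exact contDiff_pi.mpr fun j => by fin_cases j <;> simp <;> fun_prop
  · intro μ p
    fin_cases μ <;>
      simp [lieOmega, Fin.sum_univ_five, ω0, Matrix.vecHead, Matrix.vecTail] <;> ring
  · intro μ ν p
    fin_cases μ <;> fin_cases ν <;>
      simp [lieG, Fin.sum_univ_five, ω0, gA, Matrix.vecHead, Matrix.vecTail] <;> ring

lemma att1 :
    ∃ (pf qf : Pt → ℝ) (μf : Pt → Pt),
      ContDiff ℝ (⊤ : ℕ∞) pf ∧ ContDiff ℝ (⊤ : ℕ∞) qf ∧ ContDiff ℝ (⊤ : ℕ∞) μf ∧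
      (∀ (μ : Fin 5) (p : Pt), lieOmega (Xatt 1) μ p = pf p * ω0 p μ) ∧
      (∀ (μ ν : Fin 5) (p : Pt),
        lieG (Xatt 1) μ ν p
          = qf p * gA p μ ν + (μf p μ * ω0 p ν + μf p ν * ω0 p μ)) := by
  have hX : Xatt 1 = (fun p => ![p 0 * p 0, p 0 * p 1, p 0 * p 2, p 2 - p 3 * p 0 - p 4 * p 1, 0]) := rfl
  rw [hX]
  refine symcheck _ (fun p => p 0) (fun _ => ![1, 0, 0, 0, 0]) ?_ ?_ ?_ ?_
  · fun_prop
  · exact contDiff_pi.mpr fun j => by fin_cases j <;> simp <;> fun_prop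
  · intro μ p
    fin_cases μ <;>
      simp [lieOmega, Fin.sum_univ_five, ω0, Matrix.vecHead, Matrix.vecTail] <;> ring
  · intro μ ν p
    fin_cases μ <;> fin_cases ν <;>
      simp [lieG, Fin.sum_univ_five, ω0, gA, Matrix.vecHead, Matrix.vecTail] <;> ring

lemma att2 :
    ∃ (pf qf : Pt → ℝ) (μf : Pt → Pt),
      ContDiff ℝ (⊤ : ℕ∞) pf ∧ ContDiff ℝ (⊤ : ℕ∞) qf ∧ ContDiff ℝ (⊤ : ℕ∞) μf ∧
      (∀ (μ : Fin 5) (p : Pt), lieOmega (Xatt 2) μ p = pf p * ω0 p μ) ∧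
      (∀ (μ ν : Fin 5) (p : Pt),
        lieG (Xatt 2) μ ν p
          = qf p * gA p μ ν + (μf p μ * ω0 p ν + μf p ν * ω0 p μ)) := by
  have hX : Xatt 2 = (fun p => ![0, -p 2, 0, p 4 * p 3, p 4 * p 4]) := rfl
  rw [hX]
  refine symcheck _ (fun p => p 4) (fun _ => ![0, 0, 0, 0, -1]) ?_ ?_ ?_ ?_
  · fun_prop
  · exact contDiff_pi.mpr fun j => by fin_cases j <;> simp <;> fun_prop
  · intro μ p
    fin_cases μ <;>
      simp [lieOmega, Fin.sum_univ_five, ω0, Matrix.vecHead, Matrix.vecTail] <;> ring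
  · intro μ ν p
    fin_cases μ <;> fin_cases ν <;>
      simp [lieG, Fin.sum_univ_five, ω0, gA, Matrix.vecHead, Matrix.vecTail] <;> ring

lemma att3 :
    ∃ (pf qf : Pt → ℝ) (μf : Pt → Pt),
      ContDiff ℝ (⊤ : ℕ∞) pf ∧ ContDiff ℝ (⊤ : ℕ∞) qf ∧ ContDiff ℝ (⊤ : ℕ∞) μf ∧
      (∀ (μ : Fin 5) (p : Pt), lieOmega (Xatt 3) μ p = pf p * ω0 p μ) ∧
      (∀ (μ ν : Fin 5) (p : Pt),
        lieG (Xatt 3) μ ν p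
          = qf p * gA p μ ν + (μf p μ * ω0 p ν + μf p ν * ω0 p μ)) := by
  have hX : Xatt 3 = (fun p => ![0, -p 0, 0, p 4, 0]) := rfl
  rw [hX]
  refine symcheck _ (fun _ => 0) (fun _ => ![0, 0, 0, 0, 0]) ?_ ?_ ?_ ?_
  · fun_prop
  · exact contDiff_pi.mpr fun j => by fin_cases j <;> simp <;> fun_prop
  · intro μ p
    fin_cases μ <;>
      simp [lieOmega, Fin.sum_univ_five, ω0, Matrix.vecHead, Matrix.vecTail] <;> ring
  · intro μ ν p
    fin_cases μ <;> fin_cases ν <;>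
      simp [lieG, Fin.sum_univ_five, ω0, gA, Matrix.vecHead, Matrix.vecTail] <;> ring

lemma att4 :
    ∃ (pf qf : Pt → ℝ) (μf : Pt → Pt),
      ContDiff ℝ (⊤ : ℕ∞) pf ∧ ContDiff ℝ (⊤ : ℕ∞) qf ∧ ContDiff ℝ (⊤ : ℕ∞) μf ∧
      (∀ (μ : Fin 5) (p : Pt), lieOmega (Xatt 4) μ p = pf p * ω0 p μ) ∧
      (∀ (μ ν : Fin 5) (p : Pt),
        lieG (Xatt 4) μ ν p
          = qf p * gA p μ ν + (μf p μ * ω0 p ν + μf p ν * ω0 p μ)) := by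
  have hX : Xatt 4 = (fun p => ![-p 2, 0, 0, p 3 * p 3, p 3 * p 4]) := rfl
  rw [hX]
  refine symcheck _ (fun p => p 3) (fun _ => ![0, 0, 0, -1, 0]) ?_ ?_ ?_ ?_
  · fun_prop
  · exact contDiff_pi.mpr fun j => by fin_cases j <;> simp <;> fun_prop
  · intro μ p
    fin_cases μ <;>
      simp [lieOmega, Fin.sum_univ_five, ω0, Matrix.vecHead, Matrix.vecTail] <;> ring
  · intro μ ν p
    fin_cases μ <;> fin_cases ν <;>
      simp [lieG, Fin.sum_univ_five, ω0, gA, Matrix.vecHead, Matrix.vecTail] <;> ring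

lemma att5 :
    ∃ (pf qf : Pt → ℝ) (μf : Pt → Pt),
      ContDiff ℝ (⊤ : ℕ∞) pf ∧ ContDiff ℝ (⊤ : ℕ∞) qf ∧ ContDiff ℝ (⊤ : ℕ∞) μf ∧
      (∀ (μ : Fin 5) (p : Pt), lieOmega (Xatt 5) μ p = pf p * ω0 p μ) ∧
      (∀ (μ ν : Fin 5) (p : Pt),
        lieG (Xatt 5) μ ν p
          = qf p * gA p μ ν + (μf p μ * ω0 p ν + μf p ν * ω0 p μ)) := by
  have hX : Xatt 5 = (fun p => ![-p 0, 0, 0, p 3, 0]) := rfl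
  rw [hX]
  refine symcheck _ (fun _ => 0) (fun _ => ![0, 0, 0, 0, 0]) ?_ ?_ ?_ ?_
  · fun_prop
  · exact contDiff_pi.mpr fun j => by fin_cases j <;> simp <;> fun_prop
  · intro μ p
    fin_cases μ <;>
      simp [lieOmega, Fin.sum_univ_five, ω0, Matrix.vecHead, Matrix.vecTail] <;> ring
  · intro μ ν p
    fin_cases μ <;> fin_cases ν <;>
      simp [lieG, Fin.sum_univ_five, ω0, gA, Matrix.vecHead, Matrix.vecTail] <;> ring

lemma att6 :
    ∃ (pf qf : Pt → ℝ) (μf : Pt → Pt),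
      ContDiff ℝ (⊤ : ℕ∞) pf ∧ ContDiff ℝ (⊤ : ℕ∞) qf ∧ ContDiff ℝ (⊤ : ℕ∞) μf ∧
      (∀ (μ : Fin 5) (p : Pt), lieOmega (Xatt 6) μ p = pf p * ω0 p μ) ∧
      (∀ (μ ν : Fin 5) (p : Pt),
        lieG (Xatt 6) μ ν p
          = qf p * gA p μ ν + (μf p μ * ω0 p ν + μf p ν * ω0 p μ)) := by
  have hX : Xatt 6 = (fun p => ![0, 0, p 0, 1, 0]) := rfl
  rw [hX]
  refine symcheck _ (fun _ => 0) (fun _ => ![0, 0, 0, 0, 0]) ?_ ?_ ?_ ?_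
  · fun_prop
  · exact contDiff_pi.mpr fun j => by fin_cases j <;> simp <;> fun_prop
  · intro μ p
    fin_cases μ <;>
      simp [lieOmega, Fin.sum_univ_five, ω0, Matrix.vecHead, Matrix.vecTail] <;> ring
  · intro μ ν p
    fin_cases μ <;> fin_cases ν <;>
      simp [lieG, Fin.sum_univ_five, ω0, gA, Matrix.vecHead, Matrix.vecTail] <;> ring

lemma att7 :
    ∃ (pf qf : Pt → ℝ) (μf : Pt → Pt),
      ContDiff ℝ (⊤ : ℕ∞) pf ∧ ContDiff ℝ (⊤ : ℕ∞) qf ∧ ContDiff ℝ (⊤ : ℕ∞) μf ∧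
      (∀ (μ : Fin 5) (p : Pt), lieOmega (Xatt 7) μ p = pf p * ω0 p μ) ∧
      (∀ (μ ν : Fin 5) (p : Pt),
        lieG (Xatt 7) μ ν p
          = qf p * gA p μ ν + (μf p μ * ω0 p ν + μf p ν * ω0 p μ)) := by
  have hX : Xatt 7 = (fun p => ![p 1 * p 0, p 1 * p 1, p 1 * p 2, 0, p 2 - p 3 * p 0 - p 4 * p 1]) := rfl
  rw [hX]
  refine symcheck _ (fun p => p 1) (fun _ => ![0, 1, 0, 0, 0]) ?_ ?_ ?_ ?_
  · fun_prop
  · exact contDiff_pi.mpr fun j => by fin_cases j <;> simp <;> fun_prop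
  · intro μ p
    fin_cases μ <;>
      simp [lieOmega, Fin.sum_univ_five, ω0, Matrix.vecHead, Matrix.vecTail] <;> ring
  · intro μ ν p
    fin_cases μ <;> fin_cases ν <;>
      simp [lieG, Fin.sum_univ_five, ω0, gA, Matrix.vecHead, Matrix.vecTail] <;> ring

lemma att8 :
    ∃ (pf qf : Pt → ℝ) (μf : Pt → Pt),
      ContDiff ℝ (⊤ : ℕ∞) pf ∧ ContDiff ℝ (⊤ : ℕ∞) qf ∧ ContDiff ℝ (⊤ : ℕ∞) μf ∧
      (∀ (μ : Fin 5) (p : Pt), lieOmega (Xatt 8) μ p = pf p * ω0 p μ) ∧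
      (∀ (μ ν : Fin 5) (p : Pt),
        lieG (Xatt 8) μ ν p
          = qf p * gA p μ ν + (μf p μ * ω0 p ν + μf p ν * ω0 p μ)) := by
  have hX : Xatt 8 = (fun p => ![-p 1, 0, 0, 0, p 3]) := rfl
  rw [hX]
  refine symcheck _ (fun _ => 0) (fun _ => ![0, 0, 0, 0, 0]) ?_ ?_ ?_ ?_
  · fun_prop
  · exact contDiff_pi.mpr fun j => by fin_cases j <;> simp <;> fun_prop
  · intro μ p
    fin_cases μ <;>
      simp [lieOmega, Fin.sum_univ_five, ω0, Matrix.vecHead, Matrix.vecTail] <;> ring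
  · intro μ ν p
    fin_cases μ <;> fin_cases ν <;>
      simp [lieG, Fin.sum_univ_five, ω0, gA, Matrix.vecHead, Matrix.vecTail] <;> ring

lemma att9 :
    ∃ (pf qf : Pt → ℝ) (μf : Pt → Pt),
      ContDiff ℝ (⊤ : ℕ∞) pf ∧ ContDiff ℝ (⊤ : ℕ∞) qf ∧ ContDiff ℝ (⊤ : ℕ∞) μf ∧
      (∀ (μ : Fin 5) (p : Pt), lieOmega (Xatt 9) μ p = pf p * ω0 p μ) ∧
      (∀ (μ ν : Fin 5) (p : Pt),
        lieG (Xatt 9) μ ν p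
          = qf p * gA p μ ν + (μf p μ * ω0 p ν + μf p ν * ω0 p μ)) := by
  have hX : Xatt 9 = (fun p => ![p 0, 0, p 2, 0, p 4]) := rfl
  rw [hX]
  refine symcheck _ (fun _ => 1) (fun _ => ![0, 0, 0, 0, 0]) ?_ ?_ ?_ ?_
  · fun_prop
  · exact contDiff_pi.mpr fun j => by fin_cases j <;> simp <;> fun_prop
  · intro μ p
    fin_cases μ <;>
      simp [lieOmega, Fin.sum_univ_five, ω0, Matrix.vecHead, Matrix.vecTail] <;> ring
  · intro μ ν p
    fin_cases μ <;> fin_cases ν <;>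
      simp [lieG, Fin.sum_univ_five, ω0, gA, Matrix.vecHead, Matrix.vecTail] <;> ring

lemma att10 :
    ∃ (pf qf : Pt → ℝ) (μf : Pt → Pt),
      ContDiff ℝ (⊤ : ℕ∞) pf ∧ ContDiff ℝ (⊤ : ℕ∞) qf ∧ ContDiff ℝ (⊤ : ℕ∞) μf ∧
      (∀ (μ : Fin 5) (p : Pt), lieOmega (Xatt 10) μ p = pf p * ω0 p μ) ∧
      (∀ (μ ν : Fin 5) (p : Pt),
        lieG (Xatt 10) μ ν p
          = qf p * gA p μ ν + (μf p μ * ω0 p ν + μf p ν * ω0 p μ)) := by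
  have hX : Xatt 10 = (fun p => ![0, 0, p 1, 0, 1]) := rfl
  rw [hX]
  refine symcheck _ (fun _ => 0) (fun _ => ![0, 0, 0, 0, 0]) ?_ ?_ ?_ ?_
  · fun_prop
  · exact contDiff_pi.mpr fun j => by fin_cases j <;> simp <;> fun_prop
  · intro μ p
    fin_cases μ <;>
      simp [lieOmega, Fin.sum_univ_five, ω0, Matrix.vecHead, Matrix.vecTail] <;> ring
  · intro μ ν p
    fin_cases μ <;> fin_cases ν <;>
      simp [lieG, Fin.sum_univ_five, ω0, gA, Matrix.vecHead, Matrix.vecTail] <;> ring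

lemma att11 :
    ∃ (pf qf : Pt → ℝ) (μf : Pt → Pt),
      ContDiff ℝ (⊤ : ℕ∞) pf ∧ ContDiff ℝ (⊤ : ℕ∞) qf ∧ ContDiff ℝ (⊤ : ℕ∞) μf ∧
      (∀ (μ : Fin 5) (p : Pt), lieOmega (Xatt 11) μ p = pf p * ω0 p μ) ∧
      (∀ (μ ν : Fin 5) (p : Pt),
        lieG (Xatt 11) μ ν p
          = qf p * gA p μ ν + (μf p μ * ω0 p ν + μf p ν * ω0 p μ)) := by
  have hX : Xatt 11 = (fun p => ![p 0, p 1, p 2, 0, 0]) := rfl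
  rw [hX]
  refine symcheck _ (fun _ => 1) (fun _ => ![0, 0, 0, 0, 0]) ?_ ?_ ?_ ?_
  · fun_prop
  · exact contDiff_pi.mpr fun j => by fin_cases j <;> simp <;> fun_prop
  · intro μ p
    fin_cases μ <;>
      simp [lieOmega, Fin.sum_univ_five, ω0, Matrix.vecHead, Matrix.vecTail] <;> ring
  · intro μ ν p
    fin_cases μ <;> fin_cases ν <;>
      simp [lieG, Fin.sum_univ_five, ω0, gA, Matrix.vecHead, Matrix.vecTail] <;> ring

lemma att12 :
    ∃ (pf qf : Pt → ℝ) (μf : Pt → Pt),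
      ContDiff ℝ (⊤ : ℕ∞) pf ∧ ContDiff ℝ (⊤ : ℕ∞) qf ∧ ContDiff ℝ (⊤ : ℕ∞) μf ∧
      (∀ (μ : Fin 5) (p : Pt), lieOmega (Xatt 12) μ p = pf p * ω0 p μ) ∧
      (∀ (μ ν : Fin 5) (p : Pt),
        lieG (Xatt 12) μ ν p
          = qf p * gA p μ ν + (μf p μ * ω0 p ν + μf p ν * ω0 p μ)) := by
  have hX : Xatt 12 = (fun _ => ![0, 1, 0, 0, 0]) := rfl
  rw [hX]
  refine symcheck _ (fun _ => 0) (fun _ => ![0, 0, 0, 0, 0]) ?_ ?_ ?_ ?_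
  · fun_prop
  · exact contDiff_pi.mpr fun j => by fin_cases j <;> simp <;> fun_prop
  · intro μ p
    fin_cases μ <;>
      simp [lieOmega, Fin.sum_univ_five, ω0, Matrix.vecHead, Matrix.vecTail] <;> ring
  · intro μ ν p
    fin_cases μ <;> fin_cases ν <;>
      simp [lieG, Fin.sum_univ_five, ω0, gA, Matrix.vecHead, Matrix.vecTail] <;> ring

lemma att13 :
    ∃ (pf qf : Pt → ℝ) (μf : Pt → Pt),
      ContDiff ℝ (⊤ : ℕ∞) pf ∧ ContDiff ℝ (⊤ : ℕ∞) qf ∧ ContDiff ℝ (⊤ : ℕ∞) μf ∧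
      (∀ (μ : Fin 5) (p : Pt), lieOmega (Xatt 13) μ p = pf p * ω0 p μ) ∧
      (∀ (μ ν : Fin 5) (p : Pt),
        lieG (Xatt 13) μ ν p
          = qf p * gA p μ ν + (μf p μ * ω0 p ν + μf p ν * ω0 p μ)) := by
  have hX : Xatt 13 = (fun _ => ![1, 0, 0, 0, 0]) := rfl
  rw [hX]
  refine symcheck _ (fun _ => 0) (fun _ => ![0, 0, 0, 0, 0]) ?_ ?_ ?_ ?_
  · fun_prop
  · exact contDiff_pi.mpr fun j => by fin_cases j <;> simp <;> fun_prop
  · intro μ p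
    fin_cases μ <;>
      simp [lieOmega, Fin.sum_univ_five, ω0, Matrix.vecHead, Matrix.vecTail] <;> ring
  · intro μ ν p
    fin_cases μ <;> fin_cases ν <;>
      simp [lieG, Fin.sum_univ_five, ω0, gA, Matrix.vecHead, Matrix.vecTail] <;> ring

lemma att14 :
    ∃ (pf qf : Pt → ℝ) (μf : Pt → Pt),
      ContDiff ℝ (⊤ : ℕ∞) pf ∧ ContDiff ℝ (⊤ : ℕ∞) qf ∧ ContDiff ℝ (⊤ : ℕ∞) μf ∧
      (∀ (μ : Fin 5) (p : Pt), lieOmega (Xatt 14) μ p = pf p * ω0 p μ) ∧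
      (∀ (μ ν : Fin 5) (p : Pt),
        lieG (Xatt 14) μ ν p
          = qf p * gA p μ ν + (μf p μ * ω0 p ν + μf p ν * ω0 p μ)) := by
  have hX : Xatt 14 = (fun _ => ![0, 0, 1, 0, 0]) := rfl
  rw [hX]
  refine symcheck _ (fun _ => 0) (fun _ => ![0, 0, 0, 0, 0]) ?_ ?_ ?_ ?_
  · fun_prop
  · exact contDiff_pi.mpr fun j => by fin_cases j <;> simp <;> fun_prop
  · intro μ p
    fin_cases μ <;>
      simp [lieOmega, Fin.sum_univ_five, ω0, Matrix.vecHead, Matrix.vecTail] <;> ring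
  · intro μ ν p
    fin_cases μ <;> fin_cases ν <;>
      simp [lieG, Fin.sum_univ_five, ω0, gA, Matrix.vecHead, Matrix.vecTail] <;> ring

lemma XattA0 : Xatt 0 = (fun p => ![p 2 * p 0, p 2 * p 1, p 2 * p 2,
      (p 2 - p 3 * p 0 - p 4 * p 1) * p 3, (p 2 - p 3 * p 0 - p 4 * p 1) * p 4]) := rfl
lemma XattA1 : Xatt 1 = (fun p => ![p 0 * p 0, p 0 * p 1, p 0 * p 2, p 2 - p 3 * p 0 - p 4 * p 1, 0]) := rfl
lemma XattA2 : Xatt 2 = (fun p => ![0, -p 2, 0, p 4 * p 3, p 4 * p 4]) := rfl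
lemma XattA3 : Xatt 3 = (fun p => ![0, -p 0, 0, p 4, 0]) := rfl
lemma XattA4 : Xatt 4 = (fun p => ![-p 2, 0, 0, p 3 * p 3, p 3 * p 4]) := rfl
lemma XattA5 : Xatt 5 = (fun p => ![-p 0, 0, 0, p 3, 0]) := rfl
lemma XattA6 : Xatt 6 = (fun p => ![0, 0, p 0, 1, 0]) := rfl
lemma XattA7 : Xatt 7 = (fun p => ![p 1 * p 0, p 1 * p 1, p 1 * p 2, 0, p 2 - p 3 * p 0 - p 4 * p 1]) := rfl
lemma XattA8 : Xatt 8 = (fun p => ![-p 1, 0, 0, 0, p 3]) := rfl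
lemma XattA9 : Xatt 9 = (fun p => ![p 0, 0, p 2, 0, p 4]) := rfl
lemma XattA10 : Xatt 10 = (fun p => ![0, 0, p 1, 0, 1]) := rfl
lemma XattA11 : Xatt 11 = (fun p => ![p 0, p 1, p 2, 0, 0]) := rfl
lemma XattA12 : Xatt 12 = (fun _ => ![0, 1, 0, 0, 0]) := rfl
lemma XattA13 : Xatt 13 = (fun _ => ![1, 0, 0, 0, 0]) := rfl
lemma XattA14 : Xatt 14 = (fun _ => ![0, 0, 1, 0, 0]) := rfl

lemma sum15 {M : Type*} [AddCommMonoid M] (f : Fin 15 → M) :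
    ∑ i, f i = f 0 + f 1 + f 2 + f 3 + f 4 + f 5 + f 6 + f 7
      + f 8 + f 9 + f 10 + f 11 + f 12 + f 13 + f 14 := by
  rw [Fin.sum_univ_castSucc, Fin.sum_univ_castSucc, Fin.sum_univ_castSucc,
    Fin.sum_univ_castSucc, Fin.sum_univ_castSucc, Fin.sum_univ_castSucc,
    Fin.sum_univ_castSucc, Fin.sum_univ_eight]
  rfl

lemma Xatt_indep : LinearIndependent ℝ Xatt := by
    rw [Fintype.linearIndependent_iff]
    intro c hc i
    have h := fun (pt : Pt) (k : Fin 5) => congrFun (congrFun hc pt) k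
    have e0 := h ![0,0,0,0,0] 0
    have e1 := h ![0,0,0,0,0] 1
    have e2 := h ![0,0,0,0,0] 2
    have e3 := h ![0,0,0,0,0] 3
    have e4 := h ![0,0,0,0,0] 4
    have e5 := h ![1,0,0,0,0] 0
    have e6 := h ![1,0,0,0,0] 1
    have e7 := h ![0,1,0,0,0] 0
    have e8 := h ![0,1,0,0,0] 1
    have e9 := h ![0,0,1,0,0] 0
    have e10 := h ![0,0,1,0,0] 1
    have e11 := h ![0,0,1,0,0] 2
    have e12 := h ![0,0,1,0,0] 3
    have e13 := h ![0,0,1,0,0] 4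
    have e14 := h ![0,0,0,1,0] 3
    simp only [Finset.sum_apply, Pi.smul_apply, smul_eq_mul, sum15, Pi.zero_apply,
      XattA0, XattA1, XattA2, XattA3, XattA4, XattA5, XattA6, XattA7, XattA8, XattA9,
      XattA10, XattA11, XattA12, XattA13, XattA14,
      Matrix.cons_val_zero, Matrix.cons_val_one, Matrix.head_cons, Matrix.cons_val_succ, Matrix.cons_val,
      Matrix.vecHead, Matrix.vecTail,
      Function.comp] at e0 e1 e2 e3 e4 e5 e6 e7 e8 e9 e10 e11 e12 e13 e14
    norm_num at e0 e1 e2 e3 e4 e5 e6 e7 e8 e9 e10 e11 e12 e13 e14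
    have f0 : c 0 = 0 := by linarith [e0, e1, e2, e3, e4, e5, e6, e7, e8, e9, e10, e11, e12, e13, e14]
    have f1 : c 1 = 0 := by linarith [e0, e1, e2, e3, e4, e5, e6, e7, e8, e9, e10, e11, e12, e13, e14]
    have f2 : c 2 = 0 := by linarith [e0, e1, e2, e3, e4, e5, e6, e7, e8, e9, e10, e11, e12, e13, e14]
    have f3 : c 3 = 0 := by linarith [e0, e1, e2, e3, e4, e5, e6, e7, e8, e9, e10, e11, e12, e13, e14]
    have f4 : c 4 = 0 := by linarith [e0, e1, e2, e3, e4, e5, e6, e7, e8, e9, e10, e11, e12, e13, e14]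
    have f5 : c 5 = 0 := by linarith [e0, e1, e2, e3, e4, e5, e6, e7, e8, e9, e10, e11, e12, e13, e14]
    have f6 : c 6 = 0 := by linarith [e0, e1, e2, e3, e4, e5, e6, e7, e8, e9, e10, e11, e12, e13, e14]
    have f7 : c 7 = 0 := by linarith [e0, e1, e2, e3, e4, e5, e6, e7, e8, e9, e10, e11, e12, e13, e14]
    have f8 : c 8 = 0 := by linarith [e0, e1, e2, e3, e4, e5, e6, e7, e8, e9, e10, e11, e12, e13, e14]
    have f9 : c 9 = 0 := by linarith [e0, e1, e2, e3, e4, e5, e6, e7, e8, e9, e10, e11, e12, e13, e14]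
    have f10 : c 10 = 0 := by linarith [e0, e1, e2, e3, e4, e5, e6, e7, e8, e9, e10, e11, e12, e13, e14]
    have f11 : c 11 = 0 := by linarith [e0, e1, e2, e3, e4, e5, e6, e7, e8, e9, e10, e11, e12, e13, e14]
    have f12 : c 12 = 0 := by linarith [e0, e1, e2, e3, e4, e5, e6, e7, e8, e9, e10, e11, e12, e13, e14]
    have f13 : c 13 = 0 := by linarith [e0, e1, e2, e3, e4, e5, e6, e7, e8, e9, e10, e11, e12, e13, e14]
    have f14 : c 14 = 0 := by linarith [e0, e1, e2, e3, e4, e5, e6, e7, e8, e9, e10, e11, e12, e13, e14]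
    fin_cases i
    exacts [f0, f1, f2, f3, f4, f5, f6, f7, f8, f9, f10, f11, f12, f13, f14]

/-- Each of the 15 vector fields `X₁,…,X₁₅` is an infinitesimal symmetry of the pair
`(ω⁰, g)`: `L_Xω⁰ = p·ω⁰` and `L_Xg = q·g + μ⊙ω⁰` for smooth `p`, `q`, `μ`;
moreover `X₁,…,X₁₅` are linearly independent. -/
theorem attacking_mode_symmetries :
    (∀ i : Fin 15, ∃ (pf qf : Pt → ℝ) (μf : Pt → Pt),
      ContDiff ℝ (⊤ : ℕ∞) pf ∧ ContDiff ℝ (⊤ : ℕ∞) qf ∧ ContDiff ℝ (⊤ : ℕ∞) μf ∧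
      (∀ (μ : Fin 5) (p : Pt), lieOmega (Xatt i) μ p = pf p * ω0 p μ) ∧
      (∀ (μ ν : Fin 5) (p : Pt),
        lieG (Xatt i) μ ν p
          = qf p * gA p μ ν + (μf p μ * ω0 p ν + μf p ν * ω0 p μ))) ∧
    LinearIndependent ℝ Xatt := by
  constructor
  · intro i
    fin_cases i
    exacts [att0, att1, att2, att3, att4, att5, att6, att7, att8, att9,
      att10, att11, att12, att13, att14]
  · exact Xatt_indep
end
end

section
/- For (a,b) ∈ ℝ², define the 4×4 real matrices Ĝ(a,b) = [[0,0,1+a²,−ab],[0,0,ab,−(1+b²)],[1+a²,ab,0,0],[−ab,−(1+b²),0,0]] and Ĵ = [[0,0,0,1],[0,0,1,0],[0,−1,0,0],[−1,0,0,0]]. Then for every (a,b) ∈ ℝ²: (i) det Ĝ(a,b) = (1+a²+b²)², so Ĝ(a,b) is invertible; (ii) the matrix K̃(a,b) = Ĝ(a,b)⁻¹·Ĵ satisfies K̃(a,b)² = −(1+a²+b²)⁻¹·Id₄; (iii) consequently the rescaled matrix K(a,b) = (1/√(1+a²+b²))·[[−ab,−(1+b²),0,0],[1+a²,ab,0,0],[0,0,ab,−(1+a²)],[0,0,1+b²,−ab]]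 satisfies K(a,b)² = −Id₄, so K(a,b) is a complex structure on ℝ⁴. -/
open Matrix

noncomputable section

/-- Matrix of the landing-mode metric `ĝ` in the coframe `(dx,dy,db,da)`. -/
def Ghat (a b : ℝ) : Matrix (Fin 4) (Fin 4) ℝ :=
  !![0, 0, 1 + a^2, -(a*b);
     0, 0, a*b, -(1 + b^2);
     1 + a^2, a*b, 0, 0;
     -(a*b), -(1 + b^2), 0, 0]

/-- Matrix of the symplectic form `Ω = dx∧da + dy∧db` in the coframe `(dx,dy,db,da)`. -/
def Jhat : Matrix (Fin 4) (Fin 4) ℝ := !![0,0,0,1; 0,0,1,0; 0,-1,0,0; -1,0,0,0]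

/-- The rescaled operator `K(a,b)`. -/
def Kop (a b : ℝ) : Matrix (Fin 4) (Fin 4) ℝ :=
  (Real.sqrt (1 + a^2 + b^2))⁻¹ •
    !![-(a*b), -(1 + b^2), 0, 0;
       1 + a^2, a*b, 0, 0;
       0, 0, a*b, -(1 + a^2);
       0, 0, 1 + b^2, -(a*b)]

/-!
Write `D = 1 + a² + b²`. A direct computation gives `Ĵ² = -1` and `(ĴĜ)² = -D`, so
`-D⁻¹ ĴĜĴ` is a left inverse of `Ĝ`; hence `Ĝ⁻¹Ĵ = D⁻¹ĴĜ` and `(Ĝ⁻¹Ĵ)² = D⁻²(ĴĜ)² = -D⁻¹`.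
The unscaled part of `K` is block diagonal with two traceless `2 × 2` blocks of determinant `D`,
so by Cayley–Hamilton it squares to `-D`, and dividing by `√D` gives `K² = -1`.
-/

section InverseTimesComplexStructure

variable {n K : Type*} [Fintype n] [DecidableEq n] [Field K]

theorem Matrix.inv_mul_eq_inv_smul_mul {J G : Matrix n n K} {d : K} (hd : d ≠ 0)
    (hJ : J * J = -1) (hJG : J * G * (J * G) = -d • 1) :
    G⁻¹ * J = d⁻¹ • (J * G) := by
  have hinv : G⁻¹ = -d⁻¹ • (J * G * J) := by
    refine inv_eq_left_inv ?_
    rw [smul_mul_assoc, mul_assoc, hJG, smul_smul, neg_mul_neg, inv_mul_cancel₀ hd, one_smul]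
  rw [hinv, smul_mul_assoc, mul_assoc, hJ, mul_neg_one, smul_neg, neg_smul, neg_neg]

theorem Matrix.inv_mul_mul_self_eq_neg_inv_smul_one {J G : Matrix n n K} {d : K} (hd : d ≠ 0)
    (hJ : J * J = -1) (hJG : J * G * (J * G) = -d • 1) :
    G⁻¹ * J * (G⁻¹ * J) = -d⁻¹ • 1 := by
  rw [inv_mul_eq_inv_smul_mul hd hJ hJG, smul_mul_smul_comm, hJG, smul_smul]
  congr 1
  field_simp

end InverseTimesComplexStructure

theorem inv_sqrt_smul_mul_self {A : Type*} [Ring A] [Algebra ℝ A] {M : A} {d : ℝ} (hd : 0 < d)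
    (hM : M * M = -d • 1) : ((√d)⁻¹ • M) * ((√d)⁻¹ • M) = -1 := by
  rw [smul_mul_smul_comm, hM, smul_smul, ← mul_inv, Real.mul_self_sqrt hd.le, mul_neg,
    inv_mul_cancel₀ hd.ne', neg_one_smul]

theorem Ghat_det (a b : ℝ) : (Ghat a b).det = (1 + a^2 + b^2)^2 := by
  simp [Ghat, det_succ_row_zero, Fin.sum_univ_succ, Fin.succAbove]
  ring

theorem Jhat_mul_Jhat : Jhat * Jhat = -1 := by
  ext i j
  fin_cases i <;> fin_cases j <;> simp [Jhat, mul_apply, Fin.sum_univ_four]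

theorem Jhat_mul_Ghat_mul_self (a b : ℝ) :
    Jhat * Ghat a b * (Jhat * Ghat a b) = -(1 + a^2 + b^2) • 1 := by
  ext i j
  fin_cases i <;> fin_cases j <;> simp [Jhat, Ghat, mul_apply, Fin.sum_univ_four] <;> ring

def unscaledKop (a b : ℝ) : Matrix (Fin 4) (Fin 4) ℝ :=
  !![-(a*b), -(1 + b^2), 0, 0;
     1 + a^2, a*b, 0, 0;
     0, 0, a*b, -(1 + a^2);
     0, 0, 1 + b^2, -(a*b)]

theorem unscaledKop_mul_self (a b : ℝ) :
    unscaledKop a b * unscaledKop a b = -(1 + a^2 + b^2) • 1 := by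
  ext i j
  fin_cases i <;> fin_cases j <;> simp [unscaledKop, mul_apply, Fin.sum_univ_four] <;> ring

/-- (i) `det Ĝ(a,b) = (1+a²+b²)²` (so `Ĝ(a,b)` is invertible);
(ii) `K̃ = Ĝ⁻¹·Ĵ` satisfies `K̃² = −(1+a²+b²)⁻¹·Id`;
(iii) the rescaled `K(a,b)` satisfies `K² = −Id`, i.e. it is a complex
structure on `ℝ⁴`. -/
theorem landing_mode_almost_complex (a b : ℝ) :
    (Ghat a b).det = (1 + a^2 + b^2)^2 ∧
    IsUnit (Ghat a b).det ∧
    ((Ghat a b)⁻¹ * Jhat) * ((Ghat a b)⁻¹ * Jhat)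
      = (-(1 + a^2 + b^2)⁻¹ : ℝ) • (1 : Matrix (Fin 4) (Fin 4) ℝ) ∧
    Kop a b * Kop a b = -1 := by
  have hD : (0 : ℝ) < 1 + a^2 + b^2 := by positivity
  refine ⟨Ghat_det a b, ?_, ?_, ?_⟩
  · rw [Ghat_det]
    exact (pow_pos hD 2).ne'.isUnit
  · exact inv_mul_mul_self_eq_neg_inv_smul_one hD.ne' Jhat_mul_Jhat (Jhat_mul_Ghat_mul_self a b)
  · exact inv_sqrt_smul_mul_self hD (unscaledKop_mul_self a b)
end
end

section
/- For all real numbers a, b, ẋ, ẏ, ȧ, ḃ, set ż = aẋ + bẏ, u = (ẋ, ẏ, ż) ∈ ℝ³ and w = ((1+b²)ȧ − abḃ, (1+a²)ḃ − abȧ, aȧ + bḃ) ∈ ℝ³. Then the cross product u × w = 0 in ℝ³ if and only if ((1+a²)ḃ − abȧ)ẋ − ((1+b²)ȧ − abḃ)ẏ = 0. -/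
open Matrix

/-- For the saucer velocity `u = (ẋ, ẏ, ż)` with `ż = aẋ + bẏ`, and the vector
`w = ((1+b²)ȧ − abḃ, (1+a²)ḃ − abȧ, aȧ + bḃ)` tangent to the line `l⊥`,
one has `u × w = 0` if and only if `((1+a²)ḃ − abȧ)ẋ − ((1+b²)ȧ − abḃ)ẏ = 0`. -/
theorem landing_mode_cross_iff (a b xd yd ad bd : ℝ) :
    crossProduct (![xd, yd, a * xd + b * yd] : Fin 3 → ℝ)
        (![(1 + b^2) * ad - a * b * bd, (1 + a^2) * bd - a * b * ad, a * ad + b * bd] :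
          Fin 3 → ℝ) = 0
      ↔ ((1 + a^2) * bd - a * b * ad) * xd - ((1 + b^2) * ad - a * b * bd) * yd = 0 := by
  constructor
  · intro h
    have h2 := congrFun h 2
    simp [crossProduct] at h2
    linear_combination h2
  · intro h
    funext i
    fin_cases i <;> simp [crossProduct] <;>
      [linear_combination (-a) * h; linear_combination (-b) * h; linear_combination h]
end

section
/- On ℝ⁶ with coordinates (x⁰,x¹,x²,x³,x⁴,x⁵), define the smooth 1-forms ω⁰ = dx⁰ + x¹dx⁴ − 3x²dx³; ω¹ = dx¹ + 3x⁵dx² + 3(x⁵)²dx³ + (x⁵)³dx⁴; ω² = dx² + 2x⁵dx³ + (x⁵)²dx⁴; ω³ = dx³ + x⁵dx⁴; ω⁴ = dx⁴; ω⁷ = −dx⁵. Then at every point these six 1-forms are linearly independent (a coframe), and their exterior derivatives satisfy dω⁰ = ω¹∧ω⁴ − 3ω²∧ω³, dω¹ = 3ω²∧ω⁷, dω² = 2ω³∧ω⁷, dω³ = ω⁴∧ω⁷, dω⁴ = 0, dω⁷ = 0. -/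
open Matrix

noncomputable section

/-- Points of `ℝ⁶` with coordinates `(x⁰,…,x⁵)`. -/
abbrev Pt6 := Fin 6 → ℝ

/-- Exterior derivative of a 1-form `θ` (given by its components):
`dθ(p)(v,w) = (Dθ)_p(v)(w) − (Dθ)_p(w)(v)`. -/
def extD (θ : Pt6 → Pt6) (p v w : Pt6) : ℝ :=
  fderiv ℝ θ p v ⬝ᵥ w - fderiv ℝ θ p w ⬝ᵥ v

/-- Wedge of two 1-forms: `(α∧β)(v,w) = α(v)β(w) − α(w)β(v)`. -/
def wedge (α β : Pt6 → Pt6) (p v w : Pt6) : ℝ :=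
  (α p ⬝ᵥ v) * (β p ⬝ᵥ w) - (α p ⬝ᵥ w) * (β p ⬝ᵥ v)

def θ0 : Pt6 → Pt6 := fun p => ![1, 0, 0, -3 * p 2, p 1, 0]
def θ1 : Pt6 → Pt6 := fun p => ![0, 1, 3 * p 5, 3 * p 5 ^ 2, p 5 ^ 3, 0]
def θ2 : Pt6 → Pt6 := fun p => ![0, 0, 1, 2 * p 5, p 5 ^ 2, 0]
def θ3 : Pt6 → Pt6 := fun p => ![0, 0, 0, 1, p 5, 0]
def θ4 : Pt6 → Pt6 := fun _ => ![0, 0, 0, 0, 1, 0]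
def θ7 : Pt6 → Pt6 := fun _ => ![0, 0, 0, 0, 0, -1]

/-
The coefficients of the forms `θi` are polynomials in the coordinates, so their derivatives are
computed coordinatewise, and each structure equation becomes a polynomial identity in `p`, `v`, `w`.
In the basis `dx⁰, …, dx⁵` the coframe is an upper triangular matrix with diagonal
`(1, 1, 1, 1, 1, -1)`, hence invertible.
-/

theorem Matrix.linearIndependent_rows_of_isUpperTriangular {n R : Type*} [Fintype n]
    [DecidableEq n] [LinearOrder n] [CommRing R] [IsDomain R] {M : Matrix n n R}
    (hM : M.IsUpperTriangular) (hdiag : ∀ i, M i i ≠ 0) : LinearIndependent R fun i => M i :=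
  linearIndependent_rows_of_det_ne_zero <| by
    rw [det_of_isUpperTriangular hM]
    exact Finset.prod_ne_zero_iff.2 fun i _ => hdiag i

lemma linearIndependent_coframe (p : Pt6) :
    LinearIndependent ℝ ![θ0 p, θ1 p, θ2 p, θ3 p, θ4 p, θ7 p] := by
  refine linearIndependent_rows_of_isUpperTriangular (fun i j hij => ?_) fun i => ?_
  · fin_cases i <;> fin_cases j <;> simp_all [θ0, θ1, θ2, θ3, θ4, θ7]
  · fin_cases i <;> simp [θ0, θ1, θ2, θ3, θ4, θ7]

def dx (i : Fin 6) : Pt6 →L[ℝ] ℝ := ContinuousLinearMap.proj i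

@[simp] lemma dx_apply (i : Fin 6) (v : Pt6) : dx i v = v i := rfl

lemma hasFDerivAt_coord (i : Fin 6) (p : Pt6) : HasFDerivAt (fun q : Pt6 => q i) (dx i) p :=
  hasFDerivAt_apply i p

lemma extD_eq_of_hasFDerivAt {θ : Pt6 → Pt6} {L : Pt6 →L[ℝ] Pt6} {p : Pt6}
    (h : HasFDerivAt θ L p) (v w : Pt6) : extD θ p v w = L v ⬝ᵥ w - L w ⬝ᵥ v := by
  rw [extD, h.fderiv]

lemma extD_const (c p v w : Pt6) : extD (fun _ => c) p v w = 0 := by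
  simp [extD]

lemma hasFDerivAt_vecCons_six {f₀ f₁ f₂ f₃ f₄ f₅ : Pt6 → ℝ} {L₀ L₁ L₂ L₃ L₄ L₅ : Pt6 →L[ℝ] ℝ}
    {p : Pt6} (h₀ : HasFDerivAt f₀ L₀ p) (h₁ : HasFDerivAt f₁ L₁ p) (h₂ : HasFDerivAt f₂ L₂ p)
    (h₃ : HasFDerivAt f₃ L₃ p) (h₄ : HasFDerivAt f₄ L₄ p) (h₅ : HasFDerivAt f₅ L₅ p) :
    HasFDerivAt (fun q => ![f₀ q, f₁ q, f₂ q, f₃ q, f₄ q, f₅ q]) (.pi ![L₀, L₁, L₂, L₃, L₄, L₅]) p :=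
  hasFDerivAt_pi.2 fun i => by fin_cases i <;> assumption

lemma hasFDerivAt_θ0 (p : Pt6) : HasFDerivAt θ0 (.pi ![0, 0, 0, (-3 : ℝ) • dx 2, dx 1, 0]) p :=
  hasFDerivAt_vecCons_six (hasFDerivAt_const _ _) (hasFDerivAt_const _ _) (hasFDerivAt_const _ _)
    ((hasFDerivAt_coord 2 p).const_mul (-3)) (hasFDerivAt_coord 1 p) (hasFDerivAt_const _ _)

lemma hasFDerivAt_θ1 (p : Pt6) : HasFDerivAt θ1
    (.pi ![0, 0, (3 : ℝ) • dx 5, (6 * p 5) • dx 5, (3 * p 5 ^ 2) • dx 5, 0]) p :=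
  hasFDerivAt_vecCons_six (hasFDerivAt_const _ _) (hasFDerivAt_const _ _)
    ((hasFDerivAt_coord 5 p).const_mul 3)
    ((((hasFDerivAt_coord 5 p).pow 2).const_mul 3).congr_fderiv (by module))
    (((hasFDerivAt_coord 5 p).pow 3).congr_fderiv (by module)) (hasFDerivAt_const _ _)

lemma hasFDerivAt_θ2 (p : Pt6) :
    HasFDerivAt θ2 (.pi ![0, 0, 0, (2 : ℝ) • dx 5, (2 * p 5) • dx 5, 0]) p :=
  hasFDerivAt_vecCons_six (hasFDerivAt_const _ _) (hasFDerivAt_const _ _) (hasFDerivAt_const _ _)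
    ((hasFDerivAt_coord 5 p).const_mul 2)
    (((hasFDerivAt_coord 5 p).pow 2).congr_fderiv (by module)) (hasFDerivAt_const _ _)

lemma hasFDerivAt_θ3 (p : Pt6) : HasFDerivAt θ3 (.pi ![0, 0, 0, 0, dx 5, 0]) p :=
  hasFDerivAt_vecCons_six (hasFDerivAt_const _ _) (hasFDerivAt_const _ _) (hasFDerivAt_const _ _)
    (hasFDerivAt_const _ _) (hasFDerivAt_coord 5 p) (hasFDerivAt_const _ _)

lemma extD_θ0 (p v w : Pt6) : extD θ0 p v w = wedge θ1 θ4 p v w - 3 * wedge θ2 θ3 p v w := by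
  simp only [extD_eq_of_hasFDerivAt (hasFDerivAt_θ0 p), wedge, θ1, θ2, θ3, θ4, dotProduct,
    Fin.sum_univ_six, ContinuousLinearMap.coe_pi', cons_val, _root_.zero_apply,
    _root_.smul_apply, dx_apply, smul_eq_mul]
  ring

lemma extD_θ1 (p v w : Pt6) : extD θ1 p v w = 3 * wedge θ2 θ7 p v w := by
  simp only [extD_eq_of_hasFDerivAt (hasFDerivAt_θ1 p), wedge, θ2, θ7, dotProduct,
    Fin.sum_univ_six, ContinuousLinearMap.coe_pi', cons_val, _root_.zero_apply,
    _root_.smul_apply, dx_apply, smul_eq_mul]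
  ring

lemma extD_θ2 (p v w : Pt6) : extD θ2 p v w = 2 * wedge θ3 θ7 p v w := by
  simp only [extD_eq_of_hasFDerivAt (hasFDerivAt_θ2 p), wedge, θ3, θ7, dotProduct,
    Fin.sum_univ_six, ContinuousLinearMap.coe_pi', cons_val, _root_.zero_apply,
    _root_.smul_apply, dx_apply, smul_eq_mul]
  ring

lemma extD_θ3 (p v w : Pt6) : extD θ3 p v w = wedge θ4 θ7 p v w := by
  simp only [extD_eq_of_hasFDerivAt (hasFDerivAt_θ3 p), wedge, θ4, θ7, dotProduct,
    Fin.sum_univ_six, ContinuousLinearMap.coe_pi', cons_val, _root_.zero_apply, dx_apply]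
  ring

/-- The six 1-forms `ω⁰ = dx⁰ + x¹dx⁴ − 3x²dx³`, `ω¹ = dx¹ + 3x⁵dx² + 3(x⁵)²dx³ + (x⁵)³dx⁴`,
`ω² = dx² + 2x⁵dx³ + (x⁵)²dx⁴`, `ω³ = dx³ + x⁵dx⁴`, `ω⁴ = dx⁴`, `ω⁷ = −dx⁵` form
a coframe on `ℝ⁶` and satisfy the structure equations `dω⁰ = ω¹∧ω⁴ − 3ω²∧ω³`,
`dω¹ = 3ω²∧ω⁷`, `dω² = 2ω³∧ω⁷`, `dω³ = ω⁴∧ω⁷`, `dω⁴ = 0`, `dω⁷ = 0`. -/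
theorem G2_correspondence_space_structure_equations :
    (∀ p : Pt6, LinearIndependent ℝ ![θ0 p, θ1 p, θ2 p, θ3 p, θ4 p, θ7 p]) ∧
    (∀ p v w : Pt6,
      extD θ0 p v w = wedge θ1 θ4 p v w - 3 * wedge θ2 θ3 p v w ∧
      extD θ1 p v w = 3 * wedge θ2 θ7 p v w ∧
      extD θ2 p v w = 2 * wedge θ3 θ7 p v w ∧
      extD θ3 p v w = wedge θ4 θ7 p v w ∧
      extD θ4 p v w = 0 ∧
      extD θ7 p v w = 0) :=
  ⟨linearIndependent_coframe, fun p v w =>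
    ⟨extD_θ0 p v w, extD_θ1 p v w, extD_θ2 p v w, extD_θ3 p v w,
      extD_const _ p v w, extD_const _ p v w⟩⟩
end
end
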